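/- arXiv:2010.05733 — 3 statements merged into one kernel-verified Lean document; each statement's English description precedes it below -/
import Mathlib

section
/- Let H be a square root of a connected graph G with at least three vertices such that H − S is isomorphic to pK_1 + qK_2 for a set S ⊆ V(G). If a_1b_1 and a_2b_2 are two distinct S-matching edges of type 1 in H such that N_H(b_1) ∩ S = N_H(b_2) ∩ S ≠ ∅, then it is not the case that (a_1,b_1) ~mt (a_2,b_2) in G. -/
open SimpleGraph

/-- The closed neighborhood `N_G[v]` of a vertex `v`. -/
def closedNbhd {V : Type*} (G : SimpleGraph V) (v : V) : Set V :=
  insert v (G.neighborSet v)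

/-- An ordered pair `(x, y)` is comparable if `N_G[x] ⊆ N_G[y]`. -/
def ComparablePair {V : Type*} (G : SimpleGraph V) (x y : V) : Prop :=
  closedNbhd G x ⊆ closedNbhd G y

/-- `(x, y) ~mt (z, w)`: matched twins. -/
def MatchedTwins {V : Type*} (G : SimpleGraph V) (x y z w : V) : Prop :=
  closedNbhd G x \ {y} = closedNbhd G z \ {w} ∧
  closedNbhd G y \ {x} = closedNbhd G w \ {z}

/-- `(x, y) ~nt (z, w)`: nested twins. -/
def NestedTwins {V : Type*} (G : SimpleGraph V) (x y z w : V) : Prop :=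
  G.neighborSet x \ {y} = G.neighborSet z \ {w} ∧
  closedNbhd G y \ {x} = closedNbhd G w \ {z}

/-- The square `H²` of a graph: two distinct vertices are adjacent iff they are
at distance at most two in `H`. -/
def squareGraph {V : Type*} (H : SimpleGraph V) : SimpleGraph V where
  Adj u v := u ≠ v ∧ (H.Adj u v ∨ ∃ w, H.Adj u w ∧ H.Adj w v)
  symm := by
    constructor
    rintro u v ⟨hne, h⟩
    refine ⟨hne.symm, ?_⟩
    rcases h with h | ⟨w, h1, h2⟩
    · exact Or.inl h.symm
    · exact Or.inr ⟨w, h2.symm, h1.symm⟩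
  loopless := by constructor; rintro u ⟨hne, _⟩; exact hne rfl

/-- `F` is (isomorphic to) a disjoint union `pK₁ + qK₂`: it has maximum degree at most
one, `p` vertices of degree zero and `q` edges. -/
def IsDisjUnionK1K2 {W : Type*} (F : SimpleGraph W) (p q : ℕ) : Prop :=
  (∀ u v w : W, F.Adj u v → F.Adj u w → v = w) ∧
  {v : W | ∀ w, ¬ F.Adj v w}.ncard = p ∧
  F.edgeSet.ncard = q

/-- `ab` is an `S`-matching edge of type 1 in `H`. -/
def Type1Edge {V : Type*} (H : SimpleGraph V) (S : Set V) (a b : V) : Prop :=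
  a ∉ S ∧ b ∉ S ∧ H.Adj a b ∧
  H.neighborSet a ∩ S = ∅ ∧ (H.neighborSet b ∩ S).Nonempty

/-- `ab` is an `S`-matching edge of type 2 in `H`. -/
def Type2Edge {V : Type*} (H : SimpleGraph V) (S : Set V) (a b : V) : Prop :=
  a ∉ S ∧ b ∉ S ∧ H.Adj a b ∧
  (H.neighborSet a ∩ S).Nonempty ∧ (H.neighborSet b ∩ S).Nonempty ∧
  H.neighborSet a ∩ H.neighborSet b ∩ S = ∅

/-- `ab` is an `S`-matching edge of type 3 in `H`. -/
def Type3Edge {V : Type*} (H : SimpleGraph V) (S : Set V) (a b : V) : Prop :=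
  a ∉ S ∧ b ∉ S ∧ H.Adj a b ∧
  (H.neighborSet a ∩ H.neighborSet b ∩ S).Nonempty

/-!
In `H` the endpoint `a₁` of a type-1 edge has `b₁` as its only neighbour, and every neighbour
of `b₁` other than `a₁` lies in `S`. Hence the only vertices outside `S` in the closed
neighbourhood of `a₁` in `G = H²` are `a₁` and `b₁`. Matched twins would put `a₂ ∉ S` into
`N_G[a₁] \ {b₁}`, forcing `a₂ = a₁` and then `b₂ = b₁`.
-/

section MaxDegreeOne

variable {V : Type*} {H : SimpleGraph V} {S : Set V}

lemma eq_of_adj_of_adj_of_notMem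
    (hdeg : ∀ u v w : ↥Sᶜ, (H.induce Sᶜ).Adj u v → (H.induce Sᶜ).Adj u w → v = w)
    {u v w : V} (hu : u ∉ S) (hv : v ∉ S) (hw : w ∉ S)
    (huv : H.Adj u v) (huw : H.Adj u w) : v = w :=
  congrArg Subtype.val (hdeg ⟨u, hu⟩ ⟨v, hv⟩ ⟨w, hw⟩ huv huw)

lemma Type1Edge.eq_of_adj
    (hdeg : ∀ u v w : ↥Sᶜ, (H.induce Sᶜ).Adj u v → (H.induce Sᶜ).Adj u w → v = w)
    {a b w : V} (h : Type1Edge H S a b) (hw : H.Adj a w) : w = b := by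
  obtain ⟨haS, hbS, hab, hNa, -⟩ := h
  have hwS : w ∉ S := fun hwS => (Set.eq_empty_iff_forall_notMem.mp hNa) w ⟨hw, hwS⟩
  exact eq_of_adj_of_adj_of_notMem hdeg haS hwS hbS hw hab

lemma Type1Edge.eq_of_squareGraph_adj
    (hdeg : ∀ u v w : ↥Sᶜ, (H.induce Sᶜ).Adj u v → (H.induce Sᶜ).Adj u w → v = w)
    {a b x : V} (h : Type1Edge H S a b) (hx : (squareGraph H).Adj a x) (hxS : x ∉ S) : x = b := by
  obtain ⟨hax, hx | ⟨w, haw, hwx⟩⟩ := hx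
  · exact h.eq_of_adj hdeg hx
  · obtain rfl := h.eq_of_adj hdeg haw
    exact absurd (eq_of_adj_of_adj_of_notMem hdeg h.2.1 hxS h.1 hwx h.2.2.1.symm) hax.symm

lemma Type1Edge.eq_of_mem_closedNbhd_squareGraph
    (hdeg : ∀ u v w : ↥Sᶜ, (H.induce Sᶜ).Adj u v → (H.induce Sᶜ).Adj u w → v = w)
    {a b x : V} (h : Type1Edge H S a b) (hx : x ∈ closedNbhd (squareGraph H) a) (hxS : x ∉ S) :
    x = a ∨ x = b :=
  hx.imp id fun hx => h.eq_of_squareGraph_adj hdeg hx hxS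

end MaxDegreeOne

theorem stmt12_general {V : Type*} (G H : SimpleGraph V) (S : Set V) (p q : ℕ)
    (hsq : G = squareGraph H)
    (hHS : IsDisjUnionK1K2 (SimpleGraph.induce Sᶜ H) p q)
    (a₁ b₁ a₂ b₂ : V)
    (h₁ : Type1Edge H S a₁ b₁) (h₂ : Type1Edge H S a₂ b₂)
    (hne : s(a₁, b₁) ≠ s(a₂, b₂)) :
    ¬ MatchedTwins G a₁ b₁ a₂ b₂ := by
  subst hsq
  rintro ⟨hmt, -⟩
  have ha₂ : a₂ ∈ closedNbhd (squareGraph H) a₁ \ {b₁} :=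
    hmt ▸ ⟨Set.mem_insert _ _, h₂.2.2.1.ne⟩
  obtain rfl : a₂ = a₁ :=
    (h₁.eq_of_mem_closedNbhd_squareGraph hHS.1 ha₂.1 h₂.1).resolve_right ha₂.2
  exact hne (by rw [h₁.eq_of_adj hHS.1 h₂.2.2.1])

theorem stmt12 {V : Type*} [Fintype V] (G H : SimpleGraph V) (S : Set V) (p q : ℕ)
    (hconn : G.Connected) (hcard : 3 ≤ Fintype.card V)
    (hsq : G = squareGraph H)
    (hHS : IsDisjUnionK1K2 (SimpleGraph.induce Sᶜ H) p q)
    (a₁ b₁ a₂ b₂ : V)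
    (h₁ : Type1Edge H S a₁ b₁) (h₂ : Type1Edge H S a₂ b₂)
    (hne : s(a₁, b₁) ≠ s(a₂, b₂))
    (heq : H.neighborSet b₁ ∩ S = H.neighborSet b₂ ∩ S)
    (hnonempty : (H.neighborSet b₁ ∩ S).Nonempty) :
    ¬ MatchedTwins G a₁ b₁ a₂ b₂ :=
  stmt12_general G H S p q hsq hHS a₁ b₁ a₂ b₂ h₁ h₂ hne
end

section
/- Let H be a square root of a connected graph G with at least three vertices such that H − S is isomorphic to pK_1 + qK_2 for a set S ⊆ V(G). If a_1b_1 and a_2b_2 are two distinct S-matching edges of type 3 in H such that N_H(a_1) ∩ S = N_H(a_2) ∩ S and N_H(b_1) ∩ S = N_H(b_2) ∩ S, then neither (a_1,b_1) ~mt (a_2,b_2) nor (a_1,b_1) ~nt (a_2,b_2) holds in G. -/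
open SimpleGraph

/-
If `(a₁, b₁)` and `(a₂, b₂)` were matched or nested twins in `G = H²`, then every
`G`-neighbour of `a₂` other than `b₂` would lie in `N_G[a₁] \ {b₁}`, so `b₁` could be a
`G`-neighbour of `a₂` only if `b₁ = b₂`. But a common `S`-neighbour of `a₁` and `b₁` is
also an `H`-neighbour of `a₂`, which puts `b₁` at distance two from `a₂`; and `b₁` is not
an end of `a₂b₂`, since distinct edges of `H - S ≅ pK₁ + qK₂` are disjoint.
-/

section

variable {V : Type*} {G H : SimpleGraph V}

theorem MatchedTwins.eq_of_adj {x y z w : V} (h : MatchedTwins G x y z w) (hzy : G.Adj z y) :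
    y = w := by
  by_contra hyw
  have hy : y ∈ closedNbhd G z \ {w} := ⟨Set.mem_insert_of_mem _ hzy, hyw⟩
  rw [← h.1] at hy
  exact hy.2 rfl

theorem NestedTwins.eq_of_adj {x y z w : V} (h : NestedTwins G x y z w) (hzy : G.Adj z y) :
    y = w := by
  by_contra hyw
  have hy : y ∈ G.neighborSet z \ {w} := ⟨hzy, hyw⟩
  rw [← h.1] at hy
  exact hy.2 rfl

theorem squareGraph_adj_of_adj_of_adj {u v w : V} (huv : H.Adj u v) (hvw : H.Adj v w)
    (huw : u ≠ w) : (squareGraph H).Adj u w :=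
  ⟨huw, Or.inr ⟨v, huv, hvw⟩⟩

namespace IsDisjUnionK1K2

variable {S : Set V} {p q : ℕ}

theorem eq_of_adj_of_adj (hHS : IsDisjUnionK1K2 (H.induce Sᶜ) p q) {u v w : V}
    (hu : u ∉ S) (hv : v ∉ S) (hw : w ∉ S) (huv : H.Adj u v) (huw : H.Adj u w) : v = w :=
  congrArg Subtype.val (hHS.1 ⟨u, hu⟩ ⟨v, hv⟩ ⟨w, hw⟩ huv huw)

theorem notMem_of_edge_ne (hHS : IsDisjUnionK1K2 (H.induce Sᶜ) p q) {a₁ b₁ a₂ b₂ : V}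
    (ha₁ : a₁ ∉ S) (hb₁ : b₁ ∉ S) (ha₂ : a₂ ∉ S) (hb₂ : b₂ ∉ S)
    (h₁ : H.Adj a₁ b₁) (h₂ : H.Adj a₂ b₂) (hne : s(a₁, b₁) ≠ s(a₂, b₂)) :
    b₁ ∉ s(a₂, b₂) := by
  rw [Sym2.mem_iff]
  rintro (rfl | rfl)
  · obtain rfl := hHS.eq_of_adj_of_adj hb₁ ha₁ hb₂ h₁.symm h₂
    exact hne Sym2.eq_swap
  · obtain rfl := hHS.eq_of_adj_of_adj hb₁ ha₁ ha₂ h₁.symm h₂.symm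
    exact hne rfl

end IsDisjUnionK1K2

end

theorem stmt15_general {V : Type*} (G H : SimpleGraph V) (S : Set V) (p q : ℕ)
    (hsq : G = squareGraph H)
    (hHS : IsDisjUnionK1K2 (SimpleGraph.induce Sᶜ H) p q)
    (a₁ b₁ a₂ b₂ : V)
    (h₁ : Type3Edge H S a₁ b₁) (h₂ : Type3Edge H S a₂ b₂)
    (hne : s(a₁, b₁) ≠ s(a₂, b₂))
    (heqa : H.neighborSet a₁ ∩ S = H.neighborSet a₂ ∩ S) :
    ¬ MatchedTwins G a₁ b₁ a₂ b₂ ∧ ¬ NestedTwins G a₁ b₁ a₂ b₂ := by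
  obtain ⟨ha₁S, hb₁S, hab₁, s, ⟨hsa₁, hsb₁⟩, hsS⟩ := h₁
  obtain ⟨ha₂S, hb₂S, hab₂, -⟩ := h₂
  have hsa₂ : H.Adj a₂ s := (heqa ▸ ⟨hsa₁, hsS⟩ : s ∈ H.neighborSet a₂ ∩ S).1
  have hb₁ : b₁ ∉ s(a₂, b₂) := hHS.notMem_of_edge_ne ha₁S hb₁S ha₂S hb₂S hab₁ hab₂ hne
  have hb₁a₂ : b₁ ≠ a₂ := fun h => hb₁ (h ▸ Sym2.mem_mk_left _ _)
  have hb₁b₂ : b₁ ≠ b₂ := fun h => hb₁ (h ▸ Sym2.mem_mk_right _ _)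
  have hGadj : G.Adj a₂ b₁ := hsq ▸ squareGraph_adj_of_adj_of_adj hsa₂ hsb₁.symm hb₁a₂.symm
  exact ⟨fun h => hb₁b₂ (h.eq_of_adj hGadj), fun h => hb₁b₂ (h.eq_of_adj hGadj)⟩

theorem stmt15 {V : Type*} [Fintype V] (G H : SimpleGraph V) (S : Set V) (p q : ℕ)
    (hconn : G.Connected) (hcard : 3 ≤ Fintype.card V)
    (hsq : G = squareGraph H)
    (hHS : IsDisjUnionK1K2 (SimpleGraph.induce Sᶜ H) p q)
    (a₁ b₁ a₂ b₂ : V)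
    (h₁ : Type3Edge H S a₁ b₁) (h₂ : Type3Edge H S a₂ b₂)
    (hne : s(a₁, b₁) ≠ s(a₂, b₂))
    (heqa : H.neighborSet a₁ ∩ S = H.neighborSet a₂ ∩ S)
    (heqb : H.neighborSet b₁ ∩ S = H.neighborSet b₂ ∩ S) :
    ¬ MatchedTwins G a₁ b₁ a₂ b₂ ∧ ¬ NestedTwins G a₁ b₁ a₂ b₂ :=
  stmt15_general G H S p q hsq hHS a₁ b₁ a₂ b₂ h₁ h₂ hne heqa
end

section
/- Let H be a square root of a connected graph G with at least three vertices such that H − S is isomorphic to pK_1 + qK_2 for a set S ⊆ V(G) of size k. Let Q be a set of ordered pairs of adjacent vertices of G that are pairwise equivalent under ~mt. If |Q| ≥ 2k + 2^{2k} + 1, then Q contains two pairs (a_1,b_1) and (a_2,b_2) such that a_1b_1 and a_2b_2 are S-matching edges of type 2 in H satisfying N_H(a_1) ∩ S = N_H(a_2) ∩ S and N_H(b_1) ∩ S = N_H(b_2) ∩ S. -/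
open SimpleGraph

/-!
If `(a, b) ~mt (a', b')` with `a ≠ a'`, then `a a'` and `b b'` are edges of `G = H²` while
`a' ∉ N_G[b]`. In particular each coordinate of a pair in `Q` determines the other,
so at most `2k` pairs of `Q` meet `S`, and by pigeonhole on the traces `(N_H(a) ∩ S, N_H(b) ∩ S)`
two of the remaining pairs have the same traces.

For such pairs, since `H - S` has maximum degree one, every edge of `H²` between vertices outside
`S` is an edge of `H` or passes through `S`. A common `S`-neighbour of `a` and `b` would be an
`S`-neighbour of `a'` and make `a'` adjacent to `b`; so `ab` is an edge of `H` without common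
`S`-neighbour, and the edge `a a'` of `H²` cannot be an edge of `H` (that would give `a` a second
neighbour outside `S`), so it passes through an `S`-neighbour of `a`; likewise for `b`.
-/

open Set

namespace MatchedTwins

variable {V : Type*} {G : SimpleGraph V} {x y z w : V}

lemma swap (h : MatchedTwins G x y z w) : MatchedTwins G y x w z :=
  ⟨h.2, h.1⟩

lemma snd_eq_of_fst_eq (h : MatchedTwins G x y z w) (hzw : G.Adj z w) (hxz : x = z) :
    y = w := by
  by_contra hyw
  have hw : w ∈ closedNbhd G x \ {y} := ⟨hxz ▸ mem_insert_of_mem _ hzw, Ne.symm hyw⟩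
  rw [h.1] at hw
  exact hw.2 rfl

lemma fst_eq_of_snd_eq (h : MatchedTwins G x y z w) (hzw : G.Adj z w) (hyw : y = w) :
    x = z :=
  h.swap.snd_eq_of_fst_eq hzw.symm hyw

lemma adj_fst_of_ne (h : MatchedTwins G x y z w) (hzw : G.Adj z w) (hxz : x ≠ z) :
    G.Adj x z := by
  have hz : z ∈ closedNbhd G z \ {w} := ⟨mem_insert _ _, hzw.ne⟩
  rw [← h.1] at hz
  exact hz.1.resolve_left (Ne.symm hxz)

lemma notMem_closedNbhd_snd (h : MatchedTwins G x y z w) (hxz : x ≠ z) :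
    z ∉ closedNbhd G y := fun hz => by
  have hz' : z ∈ closedNbhd G y \ {x} := ⟨hz, Ne.symm hxz⟩
  rw [h.2] at hz'
  exact hz'.2 rfl

lemma fst_ne_snd (h : MatchedTwins G x y z w) (hxz : x ≠ z) : z ≠ y :=
  fun hzy => h.notMem_closedNbhd_snd hxz (hzy ▸ mem_insert z _)

end MatchedTwins

lemma IsDisjUnionK1K2.eq_of_adj_of_adj_induce_compl {V : Type*} {H : SimpleGraph V} {S : Set V}
    {p q : ℕ} (hHS : IsDisjUnionK1K2 (H.induce Sᶜ) p q) (u v w : V)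
    (hu : u ∉ S) (hv : v ∉ S) (hw : w ∉ S) (huv : H.Adj u v) (huw : H.Adj u w) : v = w :=
  congrArg Subtype.val (hHS.1 ⟨u, hu⟩ ⟨v, hv⟩ ⟨w, hw⟩ huv huw)

lemma ncard_le_ncard_sep_add {α : Type*} [Finite α] {Q : Set (α × α)} (S : Set α)
    (hfst : Q.InjOn Prod.fst) (hsnd : Q.InjOn Prod.snd) :
    Q.ncard ≤ {e ∈ Q | e.1 ∉ S ∧ e.2 ∉ S}.ncard + 2 * S.ncard := by
  have h₁ : {e ∈ Q | e.1 ∈ S}.ncard ≤ S.ncard :=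
    ncard_le_ncard_of_injOn Prod.fst (fun e he => he.2) (hfst.mono (sep_subset _ _))
  have h₂ : {e ∈ Q | e.2 ∈ S}.ncard ≤ S.ncard :=
    ncard_le_ncard_of_injOn Prod.snd (fun e he => he.2) (hsnd.mono (sep_subset _ _))
  have hcover : Q ⊆ {e ∈ Q | e.1 ∉ S ∧ e.2 ∉ S} ∪ ({e ∈ Q | e.1 ∈ S} ∪ {e ∈ Q | e.2 ∈ S}) := by
    intro e he
    by_cases h₁ : e.1 ∈ S <;> by_cases h₂ : e.2 ∈ S <;> simp_all
  have hunion := (ncard_le_ncard hcover).trans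
    ((ncard_union_le _ _).trans (Nat.add_le_add_left (ncard_union_le _ _) _))
  omega

lemma inter_neighborSet_inter_eq_empty_of_matchedTwins {V : Type*} {H : SimpleGraph V}
    {S : Set V} {a b a' b' : V}
    (hmt : MatchedTwins (squareGraph H) a b a' b') (hna : a ≠ a')
    (hA : H.neighborSet a ∩ S = H.neighborSet a' ∩ S) :
    H.neighborSet a ∩ H.neighborSet b ∩ S = ∅ := by
  refine eq_empty_of_forall_notMem fun s ⟨⟨has, hbs⟩, hs⟩ => ?_
  have ha's : s ∈ H.neighborSet a' ∩ S := hA ▸ ⟨has, hs⟩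
  have hba' : (squareGraph H).Adj b a' :=
    ⟨(hmt.fst_ne_snd hna).symm, Or.inr ⟨s, hbs, ha's.1.symm⟩⟩
  exact hmt.notMem_closedNbhd_snd hna (mem_insert_of_mem _ hba')

section SquareRoot

variable {V : Type*} {H : SimpleGraph V} {S : Set V}
  (hdeg : ∀ u v w : V, u ∉ S → v ∉ S → w ∉ S → H.Adj u v → H.Adj u w → v = w)
include hdeg

lemma squareGraph_adj_of_notMem {u v : V} (hu : u ∉ S) (hv : v ∉ S)
    (huv : (squareGraph H).Adj u v) : H.Adj u v ∨ ∃ s ∈ S, H.Adj u s ∧ H.Adj s v := by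
  obtain ⟨hne, huv | ⟨w, huw, hwv⟩⟩ := huv
  · exact Or.inl huv
  · by_cases hw : w ∈ S
    · exact Or.inr ⟨w, hw, huw, hwv⟩
    · exact absurd (hdeg w u v hw hu hv huw.symm hwv) hne

lemma inter_neighborSet_nonempty_of_squareGraph_adj {a b c : V} (ha : a ∉ S) (hb : b ∉ S)
    (hc : c ∉ S) (hab : H.Adj a b) (hac : (squareGraph H).Adj a c) (hcb : c ≠ b) :
    (H.neighborSet a ∩ S).Nonempty := by
  obtain hac | ⟨s, hs, has, -⟩ := squareGraph_adj_of_notMem hdeg ha hc hac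
  · exact absurd (hdeg a b c ha hb hc hab hac) hcb.symm
  · exact ⟨s, has, hs⟩

lemma adj_of_matchedTwins {a b a' b' : V} (ha : a ∉ S) (hb : b ∉ S)
    (hab : (squareGraph H).Adj a b) (hmt : MatchedTwins (squareGraph H) a b a' b')
    (hna : a ≠ a') (hA : H.neighborSet a ∩ S = H.neighborSet a' ∩ S) : H.Adj a b := by
  refine (squareGraph_adj_of_notMem hdeg ha hb hab).resolve_right ?_
  rintro ⟨s, hs, has, hsb⟩
  have hs' : s ∈ H.neighborSet a ∩ H.neighborSet b ∩ S := ⟨⟨has, hsb.symm⟩, hs⟩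
  rwa [inter_neighborSet_inter_eq_empty_of_matchedTwins hmt hna hA] at hs'

lemma type2Edge_of_matchedTwins {a b a' b' : V} (ha : a ∉ S) (hb : b ∉ S) (ha' : a' ∉ S)
    (hb' : b' ∉ S) (hab : (squareGraph H).Adj a b) (hab' : (squareGraph H).Adj a' b')
    (hmt : MatchedTwins (squareGraph H) a b a' b') (hna : a ≠ a') (hnb : b ≠ b')
    (hA : H.neighborSet a ∩ S = H.neighborSet a' ∩ S) : Type2Edge H S a b := by
  have hHab := adj_of_matchedTwins hdeg ha hb hab hmt hna hA
  exact ⟨ha, hb, hHab,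
    inter_neighborSet_nonempty_of_squareGraph_adj hdeg ha hb ha' hHab
      (hmt.adj_fst_of_ne hab' hna) (hmt.fst_ne_snd hna),
    inter_neighborSet_nonempty_of_squareGraph_adj hdeg hb ha hb' hHab.symm
      (hmt.swap.adj_fst_of_ne hab'.symm hnb) (hmt.swap.fst_ne_snd hnb),
    inter_neighborSet_inter_eq_empty_of_matchedTwins hmt hna hA⟩

end SquareRoot

theorem stmt18_general {V : Type*} [Fintype V] (G H : SimpleGraph V) (S : Set V) (p q k : ℕ)
    (hsq : G = squareGraph H)
    (hHS : IsDisjUnionK1K2 (SimpleGraph.induce Sᶜ H) p q)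
    (hk : S.ncard = k)
    (Q : Set (V × V))
    (hadj : ∀ e ∈ Q, G.Adj e.1 e.2)
    (hequiv : ∀ e₁ ∈ Q, ∀ e₂ ∈ Q, MatchedTwins G e₁.1 e₁.2 e₂.1 e₂.2)
    (hsize : 2 * k + 2 ^ (2 * k) + 1 ≤ Q.ncard) :
    ∃ e₁ ∈ Q, ∃ e₂ ∈ Q, e₁ ≠ e₂ ∧
      Type2Edge H S e₁.1 e₁.2 ∧ Type2Edge H S e₂.1 e₂.2 ∧
      H.neighborSet e₁.1 ∩ S = H.neighborSet e₂.1 ∩ S ∧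
      H.neighborSet e₁.2 ∩ S = H.neighborSet e₂.2 ∩ S := by
  subst hsq
  have hdeg := hHS.eq_of_adj_of_adj_induce_compl
  have hfst : Q.InjOn Prod.fst := fun e₁ h₁ e₂ h₂ h =>
    Prod.ext h ((hequiv e₁ h₁ e₂ h₂).snd_eq_of_fst_eq (hadj e₂ h₂) h)
  have hsnd : Q.InjOn Prod.snd := fun e₁ h₁ e₂ h₂ h =>
    Prod.ext ((hequiv e₁ h₁ e₂ h₂).fst_eq_of_snd_eq (hadj e₂ h₂) h) h
  have hlt : (𝒫 S ×ˢ 𝒫 S).ncard < {e ∈ Q | e.1 ∉ S ∧ e.2 ∉ S}.ncard := by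
    have := ncard_le_ncard_sep_add S hfst hsnd
    rw [ncard_prod, ncard_powerset, hk, ← pow_add, ← two_mul]
    omega
  obtain ⟨x, ⟨hx, hx₁, hx₂⟩, y, ⟨hy, hy₁, hy₂⟩, hxy, htrace⟩ :=
    exists_ne_map_eq_of_ncard_lt_of_maps_to hlt
      (f := fun e => (H.neighborSet e.1 ∩ S, H.neighborSet e.2 ∩ S))
      fun _ _ => ⟨inter_subset_right, inter_subset_right⟩
  obtain ⟨hA, hB⟩ := Prod.ext_iff.mp htrace
  have hna : x.1 ≠ y.1 := fun h => hxy (hfst hx hy h)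
  have hnb : x.2 ≠ y.2 := fun h => hxy (hsnd hx hy h)
  exact ⟨x, hx, y, hy, hxy,
    type2Edge_of_matchedTwins hdeg hx₁ hx₂ hy₁ hy₂ (hadj x hx) (hadj y hy) (hequiv x hx y hy)
      hna hnb hA,
    type2Edge_of_matchedTwins hdeg hy₁ hy₂ hx₁ hx₂ (hadj y hy) (hadj x hx) (hequiv y hy x hx)
      hna.symm hnb.symm hA.symm,
    hA, hB⟩

theorem stmt18 {V : Type*} [Fintype V] (G H : SimpleGraph V) (S : Set V) (p q k : ℕ)
    (hconn : G.Connected) (hcard : 3 ≤ Fintype.card V)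
    (hsq : G = squareGraph H)
    (hHS : IsDisjUnionK1K2 (SimpleGraph.induce Sᶜ H) p q)
    (hk : S.ncard = k)
    (Q : Set (V × V))
    (hadj : ∀ e ∈ Q, G.Adj e.1 e.2)
    (hequiv : ∀ e₁ ∈ Q, ∀ e₂ ∈ Q, MatchedTwins G e₁.1 e₁.2 e₂.1 e₂.2)
    (hsize : 2 * k + 2 ^ (2 * k) + 1 ≤ Q.ncard) :
    ∃ e₁ ∈ Q, ∃ e₂ ∈ Q, e₁ ≠ e₂ ∧
      Type2Edge H S e₁.1 e₁.2 ∧ Type2Edge H S e₂.1 e₂.2 ∧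
      H.neighborSet e₁.1 ∩ S = H.neighborSet e₂.1 ∩ S ∧
      H.neighborSet e₁.2 ∩ S = H.neighborSet e₂.2 ∩ S :=
  stmt18_general G H S p q k hsq hHS hk Q hadj hequiv hsize
end
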